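/- arXiv:0804.0944 — 2 statements merged into one kernel-verified Lean document; each statement's English description precedes it below -/
import Mathlib

section
/- Let Sym_nc be the free associative algebra over ℚ(t) on generators h₁, h₂, ..., graded with deg(h_k) = k, with basis {h_α} indexed by compositions (h_α = h_{α_1}⋯h_{α_ℓ}). Define ribbon functions R_α = Σ_{β ≥ α} (−1)^{ℓ(α)−ℓ(β)} h_β, Hall-Littlewood functions H_α(t) = Σ_{β ≥ α} t^{c(α,β^c)} R_β, and for γ a composition of n with α ≤ γ the γ-ribbon Schur functions R_α^{(γ)}(t) = Σ_{β ≥ α, D(α)\D(β) ⊆ D(γ)} t^{c(α,β^c)} R_β. Then for every α ≤ γ: H_α(t) = Σ_{α ≤ β ≤ γ} t^{c(α,β^c)} R_β^{(γ)}(t). -/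
open Finset

noncomputable section

/-- The field `ℚ(t)`. -/
abbrev Ft : Type := RatFunc ℚ

/-- The variable `t ∈ ℚ(t)`. -/
def tt : Ft := RatFunc.X

/-- Descent sets of compositions of `n` are subsets of `{1,...,n-1}`. -/
def ground (n : ℕ) : Finset ℕ := Finset.Icc 1 (n - 1)

/-- `c(α,β) = Σ_{i ∈ D(α) ∩ D(β)} i`. -/
def cstat (A B : Finset ℕ) : ℕ := ∑ i ∈ A ∩ B, i

/-- The degree-`n` component of the free algebra `Sym_nc` is the free module with basis
`{h_α}` indexed by compositions of `n`, identified with their descent sets. -/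
def h : Finset ℕ → (Finset ℕ →₀ Ft) := fun B => Finsupp.single B 1

/-- Ribbon Schur functions `R_α = Σ_{β ≥ α} (−1)^{ℓ(α)−ℓ(β)} h_β`; `β ≥ α` means
`D(β) ⊆ D(α)` and `ℓ(α) − ℓ(β) = |D(α)| − |D(β)|`. -/
def Rib (A : Finset ℕ) : Finset ℕ →₀ Ft :=
  ∑ B ∈ A.powerset, ((-1 : Ft) ^ (A.card - B.card)) • h B

/-- Hall-Littlewood functions `H_α(t) = Σ_{β ≥ α} t^{c(α,β^c)} R_β`. -/
def HL (n : ℕ) (A : Finset ℕ) : Finset ℕ →₀ Ft :=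
  ∑ B ∈ A.powerset, (tt ^ cstat A (ground n \ B)) • Rib B

/-- `γ`-ribbon Schur functions
`R_α^{(γ)}(t) = Σ_{β ≥ α, D(α)\D(β) ⊆ D(γ)} t^{c(α,β^c)} R_β`. -/
def gSchur (n : ℕ) (G A : Finset ℕ) : Finset ℕ →₀ Ft :=
  ∑ B ∈ A.powerset.filter (fun B => A \ B ⊆ G), (tt ^ cstat A (ground n \ B)) • Rib B

/-
Expanding every `γ`-ribbon Schur function, the right-hand side becomes a double sum over pairs
`C ⊆ B` with `G ⊆ B ⊆ A` and `B \ C ⊆ G`. Such pairs are exactly `(C, C ∪ G)` with `C ⊆ A`, and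
along this bijection the exponents add up: `c(α, β^c) + c(β, δ^c) = c(α, δ^c)` whenever
`δ ≤ β ≤ α`, because `D(α) \ D(δ)` splits disjointly at `D(β)`. So the double sum collapses
termwise to the defining sum of `H_α(t)`.
-/

theorem cstat_sdiff_add_cstat_sdiff {A B C : Finset ℕ} (X : Finset ℕ) (hCB : C ⊆ B)
    (hBA : B ⊆ A) : cstat A (X \ B) + cstat B (X \ C) = cstat A (X \ C) := by
  have hsplit : A ∩ (X \ C) = A ∩ (X \ B) ∪ B ∩ (X \ C) := by
    ext i
    simp only [mem_union, mem_inter, mem_sdiff]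
    by_cases hiB : i ∈ B
    · have := hBA hiB
      tauto
    · have := mt (@hCB i) hiB
      tauto
  have hdisj : Disjoint (A ∩ (X \ B)) (B ∩ (X \ C)) :=
    disjoint_left.2 fun i hi₁ hi₂ => (mem_sdiff.1 (mem_inter.1 hi₁).2).2 (mem_inter.1 hi₂).1
  rw [cstat, cstat, cstat, hsplit, sum_union hdisj]

theorem subset_and_sdiff_subset_iff_eq_union {A B C G : Finset ℕ} (hGA : G ⊆ A) :
    (B ⊆ A ∧ G ⊆ B) ∧ C ⊆ B ∧ B \ C ⊆ G ↔ B = C ∪ G ∧ C ⊆ A := by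
  constructor
  · rintro ⟨⟨hBA, hGB⟩, hCB, hBCG⟩
    exact ⟨(union_subset hCB hGB).antisymm' (sdiff_le_iff.1 hBCG), hCB.trans hBA⟩
  · rintro ⟨rfl, hCA⟩
    exact ⟨⟨union_subset hCA hGA, subset_union_right⟩, subset_union_left, by
      rw [union_sdiff_left]; exact sdiff_subset⟩

theorem stmt6_general (n : ℕ) (G A : Finset ℕ)
    (hGA : G ⊆ A) :
    HL n A = ∑ B ∈ A.powerset.filter (fun B => G ⊆ B),
      (tt ^ cstat A (ground n \ B)) • gSchur n G B := by
  simp only [HL, gSchur, smul_sum, smul_smul, ← pow_add]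
  rw [sum_comm' (t' := A.powerset) (s' := fun C => {C ∪ G}) fun B C => by
    simpa only [mem_filter, mem_powerset, mem_singleton]
      using subset_and_sdiff_subset_iff_eq_union hGA]
  refine sum_congr rfl fun C hC => ?_
  rw [sum_singleton, cstat_sdiff_add_cstat_sdiff _ subset_union_left
    (union_subset (mem_powerset.1 hC) hGA)]

/-- For all `α ≤ γ` (i.e. `D(γ) ⊆ D(α)`):
`H_α(t) = Σ_{α ≤ β ≤ γ} t^{c(α,β^c)} R_β^{(γ)}(t)`. -/
theorem stmt6 (n : ℕ) (G A : Finset ℕ)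
    (hA : A ⊆ ground n) (hGA : G ⊆ A) :
    HL n A = ∑ B ∈ A.powerset.filter (fun B => G ⊆ B),
      (tt ^ cstat A (ground n \ B)) • gSchur n G B :=
  stmt6_general n G A hGA
end
end

section
/- With the γ-ribbon Schur functions R_α^{(γ)}(t) = Σ_{β ≥ α, D(α)\D(β) ⊆ D(γ)} t^{c(α,β^c)} R_β and Hall-Littlewood functions H_α(t) = Σ_{β ≥ α} t^{c(α,β^c)} R_β, for all α ≤ γ: R_α^{(γ)}(t) = Σ_{α ≤ β ≤ γ} (−1)^{ℓ(α)−ℓ(β)} t^{c(α,β^c)} H_β(t). -/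
open Finset

noncomputable section

lemma alt0 (E : Finset ℕ) :
    ∑ T ∈ E.powerset, ((-1 : Ft) ^ T.card) = if E = ∅ then 1 else 0 := by
  have h := Finset.sum_powerset_neg_one_pow_card (x := E)
  have := congrArg (Int.cast : ℤ → Ft) h
  push_cast at this
  rw [this]

lemma alt1 (E : Finset ℕ) :
    ∑ T ∈ E.powerset, ((-1 : Ft) ^ (E.card - T.card)) = if E = ∅ then 1 else 0 := by
  rw [← alt0]
  refine Finset.sum_nbij' (fun T => E \ T) (fun T => E \ T) ?_ ?_ ?_ ?_ ?_
  · intro T hT; simp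
  · intro T hT; simp
  · intro T hT; simp only [Finset.mem_powerset] at hT; exact Finset.sdiff_sdiff_eq_self hT
  · intro T hT; simp only [Finset.mem_powerset] at hT; exact Finset.sdiff_sdiff_eq_self hT
  · intro T hT; simp only [Finset.mem_powerset] at hT
    rw [Finset.card_sdiff_of_subset hT]

lemma altI (D A : Finset ℕ) (hDA : D ⊆ A) :
    ∑ B ∈ A.powerset.filter (fun B => D ⊆ B), ((-1 : Ft) ^ (A.card - B.card))
      = if D = A then 1 else 0 := by
  have : (if D = A then (1:Ft) else 0) = if A \ D = ∅ then 1 else 0 := by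
    congr 1
    simp only [eq_iff_iff, Finset.sdiff_eq_empty_iff_subset]
    constructor
    · rintro rfl; exact Finset.Subset.refl _
    · intro h; exact Finset.Subset.antisymm hDA h
  rw [this, ← alt1]
  refine Finset.sum_nbij' (fun B => B \ D) (fun T => D ∪ T) ?_ ?_ ?_ ?_ ?_
  · intro B hB; simp only [Finset.mem_filter, Finset.mem_powerset] at hB
    simp only [Finset.mem_powerset]
    exact Finset.sdiff_subset_sdiff hB.1 le_rfl
  · intro T hT; simp only [Finset.mem_powerset] at hT
    simp only [Finset.mem_filter, Finset.mem_powerset]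
    exact ⟨Finset.union_subset hDA (hT.trans Finset.sdiff_subset), Finset.subset_union_left⟩
  · intro B hB; simp only [Finset.mem_filter, Finset.mem_powerset] at hB
    ext x
    simp only [Finset.mem_union, Finset.mem_sdiff]
    constructor
    · rintro (hd | ⟨hb, _⟩)
      · exact hB.2 hd
      · exact hb
    · intro hb
      by_cases hd : x ∈ D
      · exact Or.inl hd
      · exact Or.inr ⟨hb, hd⟩
  · intro T hT; simp only [Finset.mem_powerset] at hT
    have hdisj : Disjoint D T := Finset.disjoint_left.mpr
      fun x hx hxT => absurd hx (Finset.mem_sdiff.mp (hT hxT)).2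
    exact Finset.union_sdiff_cancel_left hdisj
  · intro B hB; simp only [Finset.mem_filter, Finset.mem_powerset] at hB
    congr 1
    have h1 := Finset.card_le_card hB.1
    have h2 := Finset.card_le_card hB.2
    have h3 := Finset.card_le_card hDA
    rw [Finset.card_sdiff_of_subset hDA, Finset.card_sdiff_of_subset hB.2]
    omega

lemma cstat_add {n : ℕ} {A B C : Finset ℕ} (hA : A ⊆ ground n) (hBA : B ⊆ A) (hCB : C ⊆ B) :
    cstat A (ground n \ B) + cstat B (ground n \ C) = cstat A (ground n \ C) := by
  unfold cstat
  have h1 : A ∩ (ground n \ B) = A \ B := by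
    ext x; simp only [Finset.mem_inter, Finset.mem_sdiff]
    exact ⟨fun ⟨h, _, hb⟩ => ⟨h, hb⟩, fun ⟨h, hb⟩ => ⟨h, hA h, hb⟩⟩
  have h2 : B ∩ (ground n \ C) = B \ C := by
    ext x; simp only [Finset.mem_inter, Finset.mem_sdiff]
    exact ⟨fun ⟨h, _, hb⟩ => ⟨h, hb⟩, fun ⟨h, hb⟩ => ⟨h, hA (hBA h), hb⟩⟩
  have h3 : A ∩ (ground n \ C) = A \ C := by
    ext x; simp only [Finset.mem_inter, Finset.mem_sdiff]
    exact ⟨fun ⟨h, _, hb⟩ => ⟨h, hb⟩, fun ⟨h, hb⟩ => ⟨h, hA h, hb⟩⟩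
  rw [h1, h2, h3, ← Finset.sum_union]
  · congr 1
    ext x
    simp only [Finset.mem_union, Finset.mem_sdiff]
    constructor
    · rintro (⟨ha, hb⟩ | ⟨hb, hc⟩)
      · exact ⟨ha, fun hc => hb (hCB hc)⟩
      · exact ⟨hBA hb, hc⟩
    · rintro ⟨ha, hc⟩
      by_cases hb : x ∈ B
      · exact Or.inr ⟨hb, hc⟩
      · exact Or.inl ⟨ha, hb⟩
  · simp only [Finset.disjoint_left, Finset.mem_sdiff]
    rintro x ⟨_, hb⟩ ⟨hb', _⟩
    exact hb hb'


/-- For all `α ≤ γ`: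
`R_α^{(γ)}(t) = Σ_{α ≤ β ≤ γ} (−1)^{ℓ(α)−ℓ(β)} t^{c(α,β^c)} H_β(t)`. -/
theorem stmt7 (n : ℕ) (G A : Finset ℕ)
    (hA : A ⊆ ground n) (hGA : G ⊆ A) :
    gSchur n G A = ∑ B ∈ A.powerset.filter (fun B => G ⊆ B),
      (((-1 : Ft) ^ (A.card - B.card)) * tt ^ cstat A (ground n \ B)) • HL n B := by
  classical
  have hRHS :
      (∑ B ∈ A.powerset.filter (fun B => G ⊆ B),
        (((-1 : Ft) ^ (A.card - B.card)) * tt ^ cstat A (ground n \ B)) • HL n B)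
      = ∑ C ∈ A.powerset,
          ((if G ∪ C = A then (1:Ft) else 0) * tt ^ cstat A (ground n \ C)) • Rib C := by
    simp only [HL, Finset.smul_sum, smul_smul]
    have hstep : ∀ B ∈ A.powerset.filter (fun B => G ⊆ B),
        (∑ C ∈ B.powerset,
          (((-1 : Ft) ^ (A.card - B.card) * tt ^ cstat A (ground n \ B)) *
            tt ^ cstat B (ground n \ C)) • Rib C)
        = ∑ C ∈ A.powerset,
            if C ⊆ B then
              (((-1 : Ft) ^ (A.card - B.card) * tt ^ cstat A (ground n \ B)) *
                tt ^ cstat B (ground n \ C)) • Rib C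
            else 0 := by
      intro B hB
      simp only [Finset.mem_filter, Finset.mem_powerset] at hB
      rw [← Finset.sum_filter]
      congr 1
      ext C
      simp only [Finset.mem_filter, Finset.mem_powerset]
      exact ⟨fun hc => ⟨hc.trans hB.1, hc⟩, fun hc => hc.2⟩
    rw [Finset.sum_congr rfl hstep, Finset.sum_comm]
    refine Finset.sum_congr rfl fun C hC => ?_
    simp only [Finset.mem_powerset] at hC
    have hite : ∀ B : Finset ℕ,
        (if C ⊆ B then
          (((-1 : Ft) ^ (A.card - B.card) * tt ^ cstat A (ground n \ B)) *
            tt ^ cstat B (ground n \ C)) • Rib C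
        else 0)
        = (if C ⊆ B then
            ((-1 : Ft) ^ (A.card - B.card) * tt ^ cstat A (ground n \ B)) *
              tt ^ cstat B (ground n \ C)
          else 0) • Rib C := by
      intro B; split <;> simp
    simp only [hite, ← Finset.sum_smul]
    congr 1
    rw [← Finset.sum_filter, Finset.filter_filter]
    have hfilt : A.powerset.filter (fun B => G ⊆ B ∧ C ⊆ B)
        = A.powerset.filter (fun B => G ∪ C ⊆ B) := by
      apply Finset.filter_congr
      intro B _
      simp [Finset.union_subset_iff]
    rw [hfilt]
    have hval : ∀ B ∈ A.powerset.filter (fun B => G ∪ C ⊆ B),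
        ((-1 : Ft) ^ (A.card - B.card) * tt ^ cstat A (ground n \ B)) *
          tt ^ cstat B (ground n \ C)
        = ((-1 : Ft) ^ (A.card - B.card)) * tt ^ cstat A (ground n \ C) := by
      intro B hB
      simp only [Finset.mem_filter, Finset.mem_powerset] at hB
      rw [mul_assoc, ← pow_add,
        cstat_add hA hB.1 ((Finset.subset_union_right).trans hB.2)]
    rw [Finset.sum_congr rfl hval, ← Finset.sum_mul,
      altI (G ∪ C) A (Finset.union_subset hGA hC)]
  rw [hRHS, gSchur, Finset.sum_filter]
  refine Finset.sum_congr rfl fun C hC => ?_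
  simp only [Finset.mem_powerset] at hC
  have hiff : (A \ C ⊆ G) ↔ (G ∪ C = A) := by
    constructor
    · intro hsub
      apply Finset.Subset.antisymm (Finset.union_subset hGA hC)
      intro x hx
      by_cases hc : x ∈ C
      · exact Finset.mem_union_right _ hc
      · exact Finset.mem_union_left _ (hsub (Finset.mem_sdiff.mpr ⟨hx, hc⟩))
    · intro heq x hx
      rw [Finset.mem_sdiff] at hx
      rcases Finset.mem_union.mp (heq ▸ hx.1) with hg | hc
      · exact hg
      · exact absurd hc hx.2
  by_cases hcond : A \ C ⊆ G
  · rw [if_pos hcond, if_pos (hiff.mp hcond), one_mul]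
  · rw [if_neg hcond, if_neg (fun he => hcond (hiff.mpr he)), zero_mul, zero_smul]
end
end
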